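/- Let 𝔛 be a regular semistable model over a DVR R of a smooth curve X, with dual graph G of the special fiber. The specialization map rho restricted to vertical divisors (divisors supported on the special fiber) surjects onto Prin(G), and rho maps Prin(X) surjectively onto Prin(G). -/

import Mathlib

/-!
On vertical divisors the intersection pairing is minus the Laplacian of the dual graph: off the
diagonal `C i · C j` counts the nodes joining the two components, and the diagonal entries are
then forced by `C i · 𝔛ₖ = 0`, just as the Laplacian kills constant functions. So `ρ` maps vertical
divisors onto `Prin(G)`. Principal divisors on `𝔛` have `ρ = 0`, so `ρ` of the horizontal part of a
principal divisor is `-ρ` of its vertical part; conversely, the moving lemma trades a vertical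
divisor for a linearly equivalent horizontal one with the same `ρ`.
-/

/-- The divisor-theoretic data of a regular semistable model `𝔛` over a DVR `R`
(with fraction field `K` and residue field `k`) of a smooth curve `X/K`:
* `V` indexes the irreducible components `C i` of the special fiber `𝔛ₖ`
  (the vertices of the dual graph `G`);
* `E` indexes the nodes of `𝔛ₖ` (the edges of `G`), with endpoints `ends e` and
  weights `edgeMult e = [k(p) : k]`;
* `PtX` is the set of closed points of `X` (equivalently, of horizontal prime
  divisors on `𝔛`), with degrees `ptDeg x = [k(x) : K]`;
* a divisor on `𝔛` is written uniquely as a horizontal plus a vertical divisor,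
  i.e. as a pair in `(PtX →₀ ℤ) × (V → ℤ)`;
* `pair i D = C i · D = deg (𝒪_𝔛(D)|_{C i})` is the intersection pairing;
* `Prin` is the group of principal divisors on `𝔛` (divisors of rational
  functions); its image under the first projection is `Prin(X)`, identifying a
  divisor on `X` with its Zariski closure, since the horizontal part of
  `div_𝔛(f)` is the closure of `div_X(f)`. -/
structure ModelData (V E PtX : Type) [Fintype V] [Fintype E] where
  ends : E → V × V
  edgeMult : E → ℕ
  edgeMult_pos : ∀ e, 0 < edgeMult e
  ptDeg : PtX → ℕ
  ptDeg_pos : ∀ x, 0 < ptDeg x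
  pair : V → ((PtX →₀ ℤ) × (V → ℤ)) →+ ℤ
  Prin : AddSubgroup ((PtX →₀ ℤ) × (V → ℤ))

namespace ModelData

variable {V E PtX : Type} [Fintype V] [Fintype E] [DecidableEq V]

/-- The specialization map `ρ(D) = ∑ᵢ (C i · D)[C i]`. -/
noncomputable def rho (M : ModelData V E PtX) : ((PtX →₀ ℤ) × (V → ℤ)) →+ (V → ℤ) where
  toFun D := fun i => M.pair i D
  map_zero' := by funext i; simp
  map_add' D D' := by funext i; simp

/-- The Laplacian of the dual graph `G`, with edge weights `edgeMult`. -/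
def lapG (M : ModelData V E PtX) : (V → ℤ) →+ (V → ℤ) where
  toFun f := fun v =>
    ∑ e : E,
      ((if (M.ends e).1 = v then (M.edgeMult e : ℤ) * (f (M.ends e).1 - f (M.ends e).2) else 0) +
       (if (M.ends e).2 = v then (M.edgeMult e : ℤ) * (f (M.ends e).2 - f (M.ends e).1) else 0))
  map_zero' := by funext v; simp
  map_add' f g := by
    funext v
    simp only [Pi.add_apply, ← Finset.sum_add_distrib]
    refine Finset.sum_congr rfl fun e _ => ?_
    split_ifs <;> ring

/-- The group of principal divisors on the dual graph (generated by chip-firing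
moves). -/
def PrinG (M : ModelData V E PtX) : AddSubgroup (V → ℤ) := M.lapG.range

/-- The degree of a divisor on `X`: `deg (∑ aₓ [x]) = ∑ aₓ [k(x) : K]`. -/
noncomputable def degX (M : ModelData V E PtX) : (PtX →₀ ℤ) →+ ℤ :=
  Finsupp.liftAddHom fun x => AddMonoidHom.mulRight (M.ptDeg x : ℤ)

end ModelData

theorem AddMonoidHom.eq_of_map_single_ne_of_map_one {V A : Type*} [Fintype V] [DecidableEq V]
    [AddCommGroup A] {f g : (V → ℤ) →+ A} (i : V)
    (hne : ∀ j, j ≠ i → f (Pi.single j 1) = g (Pi.single j 1)) (hone : f 1 = g 1) : f = g := by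
  have hsum (φ : (V → ℤ) →+ A) :
      φ 1 = φ (Pi.single i 1) + ∑ j ∈ Finset.univ.erase i, φ (Pi.single j 1) := by
    rw [Finset.add_sum_erase _ (fun j => φ (Pi.single j 1)) (Finset.mem_univ i), ← map_sum]
    congr 1
    exact (Finset.univ_sum_single 1).symm
  have hsingle (j : V) : f (Pi.single j 1) = g (Pi.single j 1) := by
    rcases eq_or_ne j i with rfl | hj
    · rw [hsum f, hsum g, Finset.sum_congr rfl fun k hk => hne k (Finset.ne_of_mem_erase hk)] at hone
      exact add_right_cancel hone
    · exact hne j hj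
  refine AddMonoidHom.functions_ext _ _ _ fun j x => ?_
  have hx : Pi.single j x = x • (Pi.single j 1 : V → ℤ) := by
    rw [← Pi.single_smul' j x (1 : ℤ), smul_eq_mul, mul_one]
  rw [hx, map_zsmul, map_zsmul, hsingle]

namespace ModelData

variable {V E PtX : Type} [Fintype V] [Fintype E] (M : ModelData V E PtX)

theorem rho_eq_zero_of_mem_Prin (hlin : ∀ P ∈ M.Prin, ∀ D i, M.pair i (D + P) = M.pair i D)
    {P : (PtX →₀ ℤ) × (V → ℤ)} (hP : P ∈ M.Prin) : M.rho P = 0 := by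
  funext i
  have := hlin P hP 0 i
  rwa [zero_add, map_zero] at this

theorem rho_horizontal_eq_neg_rho_vertical
    (hlin : ∀ P ∈ M.Prin, ∀ D i, M.pair i (D + P) = M.pair i D)
    {P : (PtX →₀ ℤ) × (V → ℤ)} (hP : P ∈ M.Prin) : M.rho (P.1, 0) = -M.rho (0, P.2) := by
  rw [eq_neg_iff_add_eq_zero, ← map_add, Prod.mk_add_mk, add_zero, zero_add]
  exact M.rho_eq_zero_of_mem_Prin hlin hP

variable [DecidableEq V]

theorem lapG_one : M.lapG 1 = 0 := by
  funext v
  simp [lapG]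

theorem lapG_single_apply_of_ne {i j : V} (hij : i ≠ j) :
    M.lapG (Pi.single j 1) i =
      -∑ e : E, if M.ends e = (i, j) ∨ M.ends e = (j, i) then (M.edgeMult e : ℤ) else 0 := by
  simp only [lapG, AddMonoidHom.coe_mk, ZeroHom.coe_mk, ← Finset.sum_neg_distrib]
  refine Finset.sum_congr rfl fun e _ => ?_
  rcases M.ends e with ⟨a, b⟩
  simp only [Pi.single_apply, Prod.mk.injEq]
  split_ifs <;> simp_all

theorem rho_inr_eq_neg_lapG
    (hnode : ∀ i j, i ≠ j → M.pair i (0, Pi.single j 1) =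
      ∑ e : E, if M.ends e = (i, j) ∨ M.ends e = (j, i) then (M.edgeMult e : ℤ) else 0)
    (hfib : ∀ i, M.pair i (0, fun _ => 1) = 0) (w : V → ℤ) :
    M.rho (0, w) = -M.lapG w := by
  funext i
  have hext : (M.pair i).comp (AddMonoidHom.inr _ _) =
      -(Pi.evalAddMonoidHom (fun _ => ℤ) i).comp M.lapG := by
    refine AddMonoidHom.eq_of_map_single_ne_of_map_one i (fun j hji => ?_) ?_
    · simp [hnode i j hji.symm, M.lapG_single_apply_of_ne hji.symm]
    · show M.pair i (0, fun _ => 1) = -M.lapG 1 i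
      rw [hfib, M.lapG_one, Pi.zero_apply, neg_zero]
  exact DFunLike.congr_fun hext w

end ModelData

open ModelData in
/-- For a regular semistable model `𝔛` as encoded by `M`, assuming
invariance of the intersection pairing under linear equivalence (`hlin`), the node
description of `C i · C j` (`hnode`), `C i · 𝔛ₖ = 0` (`hfib`), and the moving lemma
(`hmoving`: every vertical divisor is linearly equivalent on `𝔛` to a horizontal
divisor), the specialization map `ρ` restricted to vertical divisors surjects onto
`Prin(G)`, and `ρ` maps `Prin(X)` (the horizontal parts of principal divisors on
`𝔛`) surjectively onto `Prin(G)`. -/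
theorem prin_specializes_onto_pring {V E PtX : Type} [Fintype V] [Fintype E] [DecidableEq V]
    (M : ModelData V E PtX)
    (hlin : ∀ P ∈ M.Prin, ∀ D i, M.pair i (D + P) = M.pair i D)
    (hnode : ∀ i j, i ≠ j → M.pair i (0, Pi.single j 1) =
      ∑ e : E, if M.ends e = (i, j) ∨ M.ends e = (j, i) then (M.edgeMult e : ℤ) else 0)
    (hfib : ∀ i, M.pair i (0, fun _ => 1) = 0)
    (hmoving : ∀ w : V → ℤ, ∃ Dh : PtX →₀ ℤ, ((Dh, 0) - ((0 : PtX →₀ ℤ), w)) ∈ M.Prin) :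
    ((∀ w : V → ℤ, M.rho (0, w) ∈ M.PrinG) ∧
     (∀ g ∈ M.PrinG, ∃ w : V → ℤ, M.rho (0, w) = g)) ∧
    ((∀ P ∈ M.Prin, M.rho (P.1, 0) ∈ M.PrinG) ∧
     (∀ g ∈ M.PrinG, ∃ P ∈ M.Prin, M.rho (P.1, 0) = g)) := by
  have hvert := M.rho_inr_eq_neg_lapG hnode hfib
  have hvert_mem (w : V → ℤ) : M.rho (0, w) ∈ M.PrinG := ⟨-w, by rw [hvert, map_neg]⟩
  have hvert_onto : ∀ g ∈ M.PrinG, ∃ w : V → ℤ, M.rho (0, w) = g := by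
    rintro _ ⟨f, rfl⟩
    exact ⟨-f, by rw [hvert, map_neg, neg_neg]⟩
  refine ⟨⟨hvert_mem, hvert_onto⟩, fun P hP => ?_, fun g hg => ?_⟩
  · rw [M.rho_horizontal_eq_neg_rho_vertical hlin hP]
    exact neg_mem (hvert_mem P.2)
  · obtain ⟨w, rfl⟩ := hvert_onto g hg
    obtain ⟨Dh, hP⟩ := hmoving w
    refine ⟨_, hP, ?_⟩
    rw [Prod.fst_sub, sub_zero, ← sub_eq_zero, ← map_sub]
    exact M.rho_eq_zero_of_mem_Prin hlin hP
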